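/- Let r, p, n, k be positive integers with p dividing r. Then the ℂ-linear span of {φ_k(x_d) : d ∈ A_k(r,p,n)} in End(V^{⊗k}) is closed under composition, and hence is a unital subalgebra of End(V^{⊗k}) (the identity map equals φ_k(x_d) summed over the partitions coarser than or equal to the partition {{1,1′},…,{k,k′}}, which all lie in Π_k(r)). -/

import Mathlib

open scoped Classical
open Matrix

noncomputable section

namespace Tanabe

/-! ## Tensor space model of `V^{⊗k}` for `V = ℂ^n`.
A tensor is encoded by its coordinates, i.e. a function `(Fin k → Fin n) → ℂ`;
the basis vector `v_{i_1} ⊗ ⋯ ⊗ v_{i_k}` corresponds to the indicator function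
of the tuple `(i_1, …, i_k)`. -/

abbrev TP (n k : ℕ) : Type := (Fin k → Fin n) → ℂ

/-- The linear endomorphism of `V^{⊗k}` with matrix `K` in the standard basis:
it sends the basis vector indexed by the tuple `i` to `∑ₒ K o i • (basis vector o)`. -/
def kernelMap (n k : ℕ) (K : (Fin k → Fin n) → (Fin k → Fin n) → ℂ) :
    TP n k →ₗ[ℂ] TP n k where
  toFun f := fun o => ∑ i : Fin k → Fin n, K o i * f i
  map_add' f g := by
    funext o
    simp only [Pi.add_apply, mul_add]
    exact Finset.sum_add_distrib
  map_smul' c f := by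
    funext o
    simp only [Pi.smul_apply, smul_eq_mul, RingHom.id_apply]
    rw [Finset.mul_sum]
    exact Finset.sum_congr rfl fun i _ => by ring

/-- The diagonal (tensor-power) action `g^{⊗k}` of a matrix `g` on `V^{⊗k}`. -/
def tensorPow (n k : ℕ) (g : Matrix (Fin n) (Fin n) ℂ) : TP n k →ₗ[ℂ] TP n k :=
  kernelMap n k fun o i => ∏ t : Fin k, g (o t) (i t)

/-! ## Set partitions of `{1,…,t,1′,…,t′}`.
A set partition of `{1,…,t,1′,…,t′}` is encoded as a `Setoid` on `Fin t ⊕ Fin t`,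
with `Sum.inl` the unprimed (top row) elements and `Sum.inr` the primed (bottom row)
elements; blocks are the equivalence classes. -/

abbrev SP (t : ℕ) : Type := Setoid (Fin t ⊕ Fin t)

/-- `N(B)`: number of top-row (unprimed) elements in the block `q` of `d`. -/
def topCt {t : ℕ} (d : SP t) (q : Quotient d) : ℕ :=
  Nat.card {a : Fin t // Quotient.mk d (Sum.inl a) = q}

/-- `M(B)`: number of bottom-row (primed) elements in the block `q` of `d`. -/
def botCt {t : ℕ} (d : SP t) (q : Quotient d) : ℕ :=
  Nat.card {a : Fin t // Quotient.mk d (Sum.inr a) = q}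

/-- `|d|`: the number of blocks of `d`. -/
def nBlocks {t : ℕ} (d : SP t) : ℕ := Nat.card (Quotient d)

/-- Coefficient of `φ_t(x_d)`: equals `1` if the equalities among the values of the
combined tuple `c` are *exactly* those prescribed by `d`, and `0` otherwise. -/
def coeX (n t : ℕ) (d : SP t) (c : Fin t ⊕ Fin t → Fin n) : ℂ :=
  if ∀ a b : Fin t ⊕ Fin t, d.r a b ↔ c a = c b then 1 else 0

/-- Coefficient of `φ_t(d)` (the diagram basis): equals `1` if the values of the
combined tuple `c` agree on each block of `d`, and `0` otherwise. -/
def coeD (n t : ℕ) (d : SP t) (c : Fin t ⊕ Fin t → Fin n) : ℂ :=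
  if ∀ a b : Fin t ⊕ Fin t, d.r a b → c a = c b then 1 else 0

/-- The operator `φ_t(x_d)` on `V^{⊗t}`. -/
def phiX (n t : ℕ) (d : SP t) : TP n t →ₗ[ℂ] TP n t :=
  kernelMap n t fun o i => coeX n t d (Sum.elim i o)

/-- The operator `φ_t(d)` on `V^{⊗t}` (diagram basis). -/
def phiD (n t : ℕ) (d : SP t) : TP n t →ₗ[ℂ] TP n t :=
  kernelMap n t fun o i => coeD n t d (Sum.elim i o)

/-- `d ∈ Π_t(r)` : every block `B` satisfies `N(B) ≡ M(B) (mod r)`. -/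
def inPi (r : ℕ) {t : ℕ} (d : SP t) : Prop :=
  ∀ q : Quotient d, (topCt d q : ℤ) ≡ (botCt d q : ℤ) [ZMOD (r : ℤ)]

/-- `d ∈ Λ_t(r,p,n)` (here `m = r/p`). -/
def inLambda (r p n : ℕ) {t : ℕ} (d : SP t) : Prop :=
  nBlocks d = n ∧
  (∀ q : Quotient d,
    ((topCt d q : ℤ) ≡ (botCt d q : ℤ) [ZMOD ((r / p : ℕ) : ℤ)]) ∧
    ¬ ((topCt d q : ℤ) ≡ (botCt d q : ℤ) [ZMOD (r : ℤ)])) ∧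
  (∀ q q' : Quotient d,
    (topCt d q : ℤ) - (botCt d q : ℤ) ≡ (topCt d q' : ℤ) - (botCt d q' : ℤ) [ZMOD (r : ℤ)])

/-- `d ∈ Θ_t(r,p,n)` (here `m = r/p`). -/
def inTheta (r p n : ℕ) {t : ℕ} (d : SP t) : Prop :=
  n < nBlocks d ∧
  (∀ q : Quotient d, (topCt d q : ℤ) ≡ (botCt d q : ℤ) [ZMOD ((r / p : ℕ) : ℤ)]) ∧
  ∃ q : Quotient d, ¬ ((topCt d q : ℤ) ≡ (botCt d q : ℤ) [ZMOD (r : ℤ)])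

/-- `d ∈ A_t(r,p,n) = Π_t(r) ∪ Λ_t(r,p,n) ∪ Θ_t(r,p,n)`. -/
def inA (r p n : ℕ) {t : ℕ} (d : SP t) : Prop :=
  inPi r d ∨ inLambda r p n d ∨ inTheta r p n d

/-- `d ∈ A_{k+1/2}` : `k+1` and `(k+1)′` lie in the same block. -/
def isHalf (k : ℕ) (d : SP (k + 1)) : Prop :=
  d.r (Sum.inl (Fin.last k)) (Sum.inr (Fin.last k))

/-- `d ∈ Π_t(r,p,n)` : `d ∈ A_t(r,p,n)` with at most `n` blocks. -/
def inPiRPN (r p n : ℕ) {t : ℕ} (d : SP t) : Prop :=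
  inA r p n d ∧ nBlocks d ≤ n

/-- `{φ_k(x_d) : d ∈ A_k(r,p,n)}`. -/
def TanSet (r p n k : ℕ) : Set (TP n k →ₗ[ℂ] TP n k) :=
  {T | ∃ d : SP k, inA r p n d ∧ T = phiX n k d}

/-- `{φ_{k+1}(x_d) : d ∈ A_{k+1/2}(r,p,n)}` (as endomorphisms of `V^{⊗(k+1)}`). -/
def TanSetHalf (r p n k : ℕ) : Set (TP n (k + 1) →ₗ[ℂ] TP n (k + 1)) :=
  {T | ∃ d : SP (k + 1), (inA r p n d ∧ isHalf k d) ∧ T = phiX n (k + 1) d}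

/-! ## The groups `G(r,p,n)` and `L(r,p,n)` as matrix groups. -/

/-- The monomial matrix with underlying permutation `π` and weights `a` :
its `(i,j)` entry is `a j` if `i = π j` and `0` otherwise, so that it maps
`v_j ↦ a j • v_{π j}`. -/
def monoMat (n : ℕ) (π : Equiv.Perm (Fin n)) (a : Fin n → ℂ) :
    Matrix (Fin n) (Fin n) ℂ :=
  Matrix.of fun i j => if i = π j then a j else 0

/-- `G(r,p,n)` as a set of matrices: matrices with exactly one nonzero entry in each
row and column, whose nonzero entries are `r`-th roots of unity, and such that the
`m = r/p`-th power of the product of the nonzero entries is `1`. -/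
def GSet (r p n : ℕ) : Set (Matrix (Fin n) (Fin n) ℂ) :=
  {g | ∃ (π : Equiv.Perm (Fin n)) (a : Fin n → ℂ),
    (∀ i, a i ^ r = 1) ∧ (∏ i, a i) ^ (r / p) = 1 ∧ g = monoMat n π a}

/-- The last index of `Fin n` (position `n` in 1-indexed notation). -/
def lastIdx (n : ℕ) (hn : 0 < n) : Fin n := ⟨n - 1, by omega⟩

/-- `L(r,p,n)` as a set of matrices: elements of `G(r,p,n)` whose `(n,n)` entry
is nonzero. -/
def LSet (r p n : ℕ) (hn : 0 < n) : Set (Matrix (Fin n) (Fin n) ℂ) :=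
  {g | g ∈ GSet r p n ∧ g (lastIdx n hn) (lastIdx n hn) ≠ 0}

/-- The centralizer algebra `End_{G(r,p,n)}(V^{⊗k})`. -/
def centG (r p n k : ℕ) : Set (TP n k →ₗ[ℂ] TP n k) :=
  {F | ∀ g ∈ GSet r p n, F ∘ₗ tensorPow n k g = tensorPow n k g ∘ₗ F}

/-- The subspace `W = V^{⊗k} ⊗ ℂ v_n` of `V^{⊗(k+1)}` : coordinate functions
supported on tuples whose last entry is the last index. -/
def Wsub (n k : ℕ) (hn : 0 < n) : Submodule ℂ (TP n (k + 1)) where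
  carrier := {f | ∀ j : Fin (k + 1) → Fin n, j (Fin.last k) ≠ lastIdx n hn → f j = 0}
  add_mem' := by
    intro a b ha hb j hj
    simp [Pi.add_apply, ha j hj, hb j hj]
  zero_mem' := by intro j hj; rfl
  smul_mem' := by
    intro c a ha j hj
    simp [Pi.smul_apply, ha j hj]


/-! ## Group structure -/

abbrev GLn (n : ℕ) := Matrix.GeneralLinearGroup (Fin n) ℂ

lemma monoMat_mul (n : ℕ) (π σ : Equiv.Perm (Fin n)) (a b : Fin n → ℂ) :
    monoMat n π a * monoMat n σ b = monoMat n (π * σ) (fun j => a (σ j) * b j) := by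
  ext i j
  simp only [monoMat, Matrix.mul_apply, Matrix.of_apply, mul_ite, mul_zero, ite_mul, zero_mul]
  rw [Finset.sum_ite_eq' Finset.univ (σ j)]
  simp [Equiv.Perm.mul_apply]
  congr

lemma monoMat_one (n : ℕ) : monoMat n 1 (fun _ => (1 : ℂ)) = 1 := by
  ext i j
  simp [monoMat, Matrix.one_apply]
  congr

lemma one_mem_GSet (r p n : ℕ) : (1 : Matrix (Fin n) (Fin n) ℂ) ∈ GSet r p n :=
  ⟨1, fun _ => 1, fun _ => one_pow r, by simp, (monoMat_one n).symm⟩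

lemma mul_mem_GSet {r p n : ℕ} {g h : Matrix (Fin n) (Fin n) ℂ}
    (hg : g ∈ GSet r p n) (hh : h ∈ GSet r p n) : g * h ∈ GSet r p n := by
  obtain ⟨π, a, ha, hpa, rfl⟩ := hg
  obtain ⟨σ, b, hb, hpb, rfl⟩ := hh
  refine ⟨π * σ, fun j => a (σ j) * b j, fun i => by rw [mul_pow, ha, hb, one_mul], ?_,
    monoMat_mul n π σ a b⟩
  have h1 : (∏ i, (a (σ i) * b i)) = (∏ i, a i) * ∏ i, b i := by
    rw [Finset.prod_mul_distrib, Equiv.prod_comp σ a]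
  rw [h1, mul_pow, hpa, hpb, one_mul]

lemma a_ne_zero {r : ℕ} (hr : 0 < r) {a : ℂ} (ha : a ^ r = 1) : a ≠ 0 := by
  intro h0
  rw [h0, zero_pow hr.ne'] at ha
  exact zero_ne_one ha

lemma monoMat_mul_inv (n : ℕ) (π : Equiv.Perm (Fin n)) (a : Fin n → ℂ)
    (ha : ∀ i, a i ≠ 0) :
    monoMat n π a * monoMat n π⁻¹ (fun j => (a (π⁻¹ j))⁻¹) = 1 := by
  simp only [monoMat_mul]
  rw [mul_inv_cancel,
    show (fun j => a (π⁻¹ j) * (a (π⁻¹ j))⁻¹) = fun _ : Fin n => (1 : ℂ) from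
      funext fun j => mul_inv_cancel₀ (ha _),
    monoMat_one]

/-- The value of the inverse of a unit whose underlying matrix is a monomial matrix. -/
lemma gl_inv_val {n : ℕ} (g : GLn n) (π : Equiv.Perm (Fin n)) (a : Fin n → ℂ)
    (ha : ∀ i, a i ≠ 0) (hg : (↑g : Matrix (Fin n) (Fin n) ℂ) = monoMat n π a) :
    (↑g⁻¹ : Matrix (Fin n) (Fin n) ℂ) = monoMat n π⁻¹ (fun j => (a (π⁻¹ j))⁻¹) := by
  have hmul : (↑g : Matrix (Fin n) (Fin n) ℂ) *
      monoMat n π⁻¹ (fun j => (a (π⁻¹ j))⁻¹) = 1 := by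
    rw [hg]; exact monoMat_mul_inv n π a ha
  calc (↑g⁻¹ : Matrix (Fin n) (Fin n) ℂ)
      = ↑g⁻¹ * ((↑g : Matrix (Fin n) (Fin n) ℂ) *
          monoMat n π⁻¹ (fun j => (a (π⁻¹ j))⁻¹)) := by rw [hmul, mul_one]
    _ = ((↑g⁻¹ : Matrix (Fin n) (Fin n) ℂ) * ↑g) *
          monoMat n π⁻¹ (fun j => (a (π⁻¹ j))⁻¹) := by rw [mul_assoc]
    _ = monoMat n π⁻¹ (fun j => (a (π⁻¹ j))⁻¹) := by
          rw [← Units.val_mul, inv_mul_cancel, Units.val_one, one_mul]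

lemma inv_mem_GSet {r p n : ℕ} (hr : 0 < r) {g : GLn n}
    (hg : (↑g : Matrix (Fin n) (Fin n) ℂ) ∈ GSet r p n) :
    (↑g⁻¹ : Matrix (Fin n) (Fin n) ℂ) ∈ GSet r p n := by
  obtain ⟨π, a, ha, hpa, hgm⟩ := hg
  have hane : ∀ i, a i ≠ 0 := fun i => a_ne_zero hr (ha i)
  refine ⟨π⁻¹, fun j => (a (π⁻¹ j))⁻¹, fun i => by rw [inv_pow, ha, inv_one], ?_,
    gl_inv_val g π a hane hgm⟩
  rw [Finset.prod_inv_distrib, Equiv.prod_comp π⁻¹ a, inv_pow, hpa, inv_one]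

/-- The complex reflection group `G(r,p,n)` as a subgroup of `GL_n(ℂ)`. -/
def GGroup (r p n : ℕ) (hr : 0 < r) : Subgroup (GLn n) where
  carrier := {g | (↑g : Matrix (Fin n) (Fin n) ℂ) ∈ GSet r p n}
  one_mem' := by
    show (↑(1 : GLn n) : Matrix (Fin n) (Fin n) ℂ) ∈ GSet r p n
    rw [Units.val_one]; exact one_mem_GSet r p n
  mul_mem' := by
    intro g h hg hh
    show (↑(g * h) : Matrix (Fin n) (Fin n) ℂ) ∈ GSet r p n
    rw [Units.val_mul]; exact mul_mem_GSet hg hh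
  inv_mem' := by
    intro g hg
    exact inv_mem_GSet hr hg

lemma monoMat_last {n : ℕ} (hn : 0 < n) (π : Equiv.Perm (Fin n)) (a : Fin n → ℂ)
    (h : monoMat n π a (lastIdx n hn) (lastIdx n hn) ≠ 0) :
    π (lastIdx n hn) = lastIdx n hn ∧ a (lastIdx n hn) ≠ 0 := by
  by_cases hp : lastIdx n hn = π (lastIdx n hn)
  · refine ⟨hp.symm, ?_⟩
    intro h0
    apply h
    simp [monoMat, ← hp, h0]
  · exfalso; apply h; simp [monoMat, hp]

lemma monoMat_last_entry {n : ℕ} (hn : 0 < n) (π : Equiv.Perm (Fin n)) (a : Fin n → ℂ)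
    (hp : π (lastIdx n hn) = lastIdx n hn) :
    monoMat n π a (lastIdx n hn) (lastIdx n hn) = a (lastIdx n hn) := by
  simp [monoMat, hp]

/-- The subgroup `L(r,p,n)` of `G(r,p,n)` (matrices with nonzero `(n,n)` entry). -/
def LGroup (r p n : ℕ) (hr : 0 < r) (hn : 0 < n) : Subgroup (GLn n) where
  carrier := {g | (↑g : Matrix (Fin n) (Fin n) ℂ) ∈ LSet r p n hn}
  one_mem' := by
    refine ⟨?_, ?_⟩
    · show (↑(1 : GLn n) : Matrix (Fin n) (Fin n) ℂ) ∈ GSet r p n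
      rw [Units.val_one]; exact one_mem_GSet r p n
    · rw [Units.val_one]
      simp [Matrix.one_apply]
  mul_mem' := by
    rintro g h ⟨hg, hge⟩ ⟨hh, hhe⟩
    refine ⟨?_, ?_⟩
    · show (↑(g * h) : Matrix (Fin n) (Fin n) ℂ) ∈ GSet r p n
      rw [Units.val_mul]; exact mul_mem_GSet hg hh
    · obtain ⟨π, a, ha, hpa, hgm⟩ := hg
      obtain ⟨σ, b, hb, hpb, hhm⟩ := hh
      rw [hgm] at hge
      rw [hhm] at hhe
      obtain ⟨hπ, ha0⟩ := monoMat_last hn π a hge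
      obtain ⟨hσ, hb0⟩ := monoMat_last hn σ b hhe
      rw [Units.val_mul, hgm, hhm, monoMat_mul]
      rw [monoMat_last_entry hn _ _ (by simp [Equiv.Perm.mul_apply, hσ, hπ])]
      simp only [hσ]
      exact mul_ne_zero ha0 hb0
  inv_mem' := by
    rintro g ⟨hg, hge⟩
    obtain ⟨π, a, ha, hpa, hgm⟩ := hg
    have hane : ∀ i, a i ≠ 0 := fun i => a_ne_zero hr (ha i)
    rw [hgm] at hge
    obtain ⟨hπ, ha0⟩ := monoMat_last hn π a hge
    refine ⟨inv_mem_GSet hr ⟨π, a, ha, hpa, hgm⟩, ?_⟩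
    rw [gl_inv_val g π a hane hgm]
    have hπi : π⁻¹ (lastIdx n hn) = lastIdx n hn := by
      conv_lhs => rw [← hπ]
      simp
    rw [monoMat_last_entry hn _ _ hπi]
    simp only [hπi]
    exact inv_ne_zero ha0

lemma GGroup_le (r p n : ℕ) (hr : 0 < r) : GGroup r p n hr ≤ GGroup r 1 n hr := by
  rintro g ⟨π, a, ha, hpa, hgm⟩
  refine ⟨π, a, ha, ?_, hgm⟩
  rw [Nat.div_one, ← Finset.prod_pow]
  simp [ha]

lemma LGroup_le (r p n : ℕ) (hr : 0 < r) (hn : 0 < n) :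
    LGroup r p n hr hn ≤ LGroup r 1 n hr hn := by
  rintro g ⟨hg, hge⟩
  exact ⟨GGroup_le r p n hr hg, hge⟩

lemma LGroup_le_GGroup (r p n : ℕ) (hr : 0 < r) (hn : 0 < n) :
    LGroup r p n hr hn ≤ GGroup r p n hr := fun _ hg => hg.1

lemma LGroup_le_G1 (r p n : ℕ) (hr : 0 < r) (hn : 0 < n) :
    LGroup r p n hr hn ≤ GGroup r 1 n hr :=
  le_trans (LGroup_le_GGroup r p n hr hn) (GGroup_le r p n hr)

/-! ## Representation-theoretic notions -/

section Reps

variable {G : Type*} [Monoid G] {V : Type*} [AddCommGroup V] [Module ℂ V]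

/-- A submodule invariant under a representation. -/
def RepInvariant (ρ : Representation ℂ G V) (q : Submodule ℂ V) : Prop :=
  ∀ (g : G), ∀ v ∈ q, ρ g v ∈ q

/-- Irreducibility of a representation. -/
def RepIrreducible (ρ : Representation ℂ G V) : Prop :=
  Nontrivial V ∧ ∀ q : Submodule ℂ V, RepInvariant ρ q → q = ⊥ ∨ q = ⊤

/-- Irreducibility of an invariant subspace, as a subrepresentation. -/
def SubIrreducible (ρ : Representation ℂ G V) (q : Submodule ℂ V) : Prop :=
  q ≠ ⊥ ∧ ∀ q' : Submodule ℂ V, q' ≤ q → RepInvariant ρ q' → q' = ⊥ ∨ q' = q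

/-- Two (invariant) subspaces are isomorphic as subrepresentations: there is a
`ℂ`-linear equivalence between them intertwining the action. -/
def IsSubrepIso (ρ : Representation ℂ G V) (q q' : Submodule ℂ V) : Prop :=
  ∃ e : q ≃ₗ[ℂ] q', ∀ (g : G) (x : V) (hx : x ∈ q) (hgx : ρ g x ∈ q),
    ((e ⟨ρ g x, hgx⟩ : q') : V) = ρ g ((e ⟨x, hx⟩ : q') : V)

/-- A representation is multiplicity free: it is an (internal) direct sum of
pairwise non-isomorphic irreducible subrepresentations. -/
def RepMultFree (ρ : Representation ℂ G V) : Prop :=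
  ∃ (ι : Type) (_ : Fintype ι) (W : ι → Submodule ℂ V),
    (∀ i, RepInvariant ρ (W i)) ∧
    (∀ i, SubIrreducible ρ (W i)) ∧
    iSupIndep W ∧ (⨆ i, W i) = ⊤ ∧
    (∀ i j, i ≠ j → ¬ IsSubrepIso ρ (W i) (W j))

/-- Restriction of a representation of `K` to a subgroup `H ≤ K`. -/
def restrictRep {G : Type*} [Group G] {H K : Subgroup G} (h : H ≤ K)
    (ρ : Representation ℂ ↥K V) : Representation ℂ ↥H V :=
  MonoidHom.comp ρ (Subgroup.inclusion h)

end Reps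

/-! ## The elements `ζ_i^l ζ_j^{-l} s_{ij}` and the central elements `κ` -/

/-- `ζ = exp(2πi/r)`, a primitive `r`-th root of unity. -/
def zeta (r : ℕ) : ℂ := Complex.exp (2 * Real.pi * Complex.I / r)

lemma zeta_pow_self {r : ℕ} (hr : 0 < r) : zeta r ^ r = 1 := by
  rw [zeta, ← Complex.exp_nat_mul]
  rw [show (r : ℂ) * (2 * Real.pi * Complex.I / r) = 2 * Real.pi * Complex.I by
    rw [mul_div_assoc']
    exact mul_div_cancel_left₀ _ (Nat.cast_ne_zero.mpr hr.ne')]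
  exact Complex.exp_two_pi_mul_I

lemma zeta_ne_zero (r : ℕ) : zeta r ≠ 0 := Complex.exp_ne_zero _

/-- Weights of the monomial matrix `ζ_i^l ζ_j^{-l} s_{ij}` : `ζ^l` in position `i`,
`ζ^{-l}` in position `j`, `1` elsewhere. -/
def zijWt (r l : ℕ) {n : ℕ} (i j : Fin n) : Fin n → ℂ :=
  fun t => if t = i then zeta r ^ l else if t = j then (zeta r ^ l)⁻¹ else 1

/-- The matrix `ζ_i^l ζ_j^{-l} s_{ij}`. -/
def zijMat (n r l : ℕ) (i j : Fin n) : Matrix (Fin n) (Fin n) ℂ :=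
  monoMat n (Equiv.swap i j) (zijWt r l i j)

lemma zijWt_ne_zero (r l : ℕ) {n : ℕ} (i j : Fin n) (t : Fin n) :
    zijWt r l i j t ≠ 0 := by
  unfold zijWt
  split_ifs
  · exact pow_ne_zero _ (zeta_ne_zero r)
  · exact inv_ne_zero (pow_ne_zero _ (zeta_ne_zero r))
  · exact one_ne_zero

lemma zijWt_pow {r l : ℕ} (hr : 0 < r) {n : ℕ} (i j : Fin n) (t : Fin n) :
    zijWt r l i j t ^ r = 1 := by
  unfold zijWt
  split_ifs
  · rw [← pow_mul, mul_comm, pow_mul, zeta_pow_self hr, one_pow]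
  · rw [inv_pow, ← pow_mul, mul_comm, pow_mul, zeta_pow_self hr, one_pow, inv_one]
  · exact one_pow r

lemma zijWt_prod {r l : ℕ} {n : ℕ} {i j : Fin n} (hij : i ≠ j) :
    (∏ t, zijWt r l i j t) = 1 := by
  have hfun : (fun t => zijWt r l i j t) =
      fun t => (if t = i then zeta r ^ l else 1) * (if t = j then (zeta r ^ l)⁻¹ else 1) := by
    funext t
    by_cases h1 : t = i <;> by_cases h2 : t = j
    · exact absurd (h1.symm.trans h2) hij
    · simp [zijWt, h1, h2, hij]
    · simp [zijWt, h1, h2, hij, Ne.symm hij]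
    · simp [zijWt, h1, h2]
  rw [hfun, Finset.prod_mul_distrib, Finset.prod_ite_eq' Finset.univ i,
    Finset.prod_ite_eq' Finset.univ j]
  simp [mul_inv_cancel₀ (pow_ne_zero l (zeta_ne_zero r))]

lemma zij_mem_GSet (r p n l : ℕ) (hr : 0 < r) (i j : Fin n) (hij : i ≠ j) :
    zijMat n r l i j ∈ GSet r p n := by
  refine ⟨Equiv.swap i j, zijWt r l i j, zijWt_pow hr i j, ?_, rfl⟩
  rw [zijWt_prod hij, one_pow]

/-- A monomial matrix with nonzero weights, as an element of `GL_n(ℂ)`. -/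
def monoUnit (n : ℕ) (π : Equiv.Perm (Fin n)) (a : Fin n → ℂ) (ha : ∀ i, a i ≠ 0) :
    GLn n where
  val := monoMat n π a
  inv := monoMat n π⁻¹ (fun j => (a (π⁻¹ j))⁻¹)
  val_inv := monoMat_mul_inv n π a ha
  inv_val := by
    simp only [monoMat_mul]
    rw [inv_mul_cancel,
      show (fun j => (a (π⁻¹ (π j)))⁻¹ * a j) = fun _ : Fin n => (1 : ℂ) from
        funext fun j => by rw [Equiv.Perm.coe_inv, Equiv.symm_apply_apply, inv_mul_cancel₀ (ha _)],
      monoMat_one]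

/-- The element `ζ_i^l ζ_j^{-l} s_{ij}` of `G(r,p,n)`. -/
def zijG (r p n l : ℕ) (hr : 0 < r) (i j : Fin n) (hij : i ≠ j) : ↥(GGroup r p n hr) :=
  ⟨monoUnit n (Equiv.swap i j) (zijWt r l i j) (zijWt_ne_zero r l i j),
   zij_mem_GSet r p n l hr i j hij⟩

/-- The element `κ_{r,n} = (1/r)·Σ_{l<r} Σ_{i<j} ζ_i^l ζ_j^{-l} s_{ij}` of the group
algebra `ℂ[G(r,p,n)]`. -/
def kappaGA (r p n : ℕ) (hr : 0 < r) : MonoidAlgebra ℂ ↥(GGroup r p n hr) :=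
  (1 / (r : ℂ)) • ∑ l ∈ Finset.range r, ∑ i : Fin n, ∑ j : Fin n,
    if h : i < j then MonoidAlgebra.single (zijG r p n l hr i j h.ne) 1 else 0

lemma zijL_last (r l : ℕ) {n : ℕ} (hn : 0 < n) (i j : Fin n)
    (hi : i ≠ lastIdx n hn) (hj : j ≠ lastIdx n hn) :
    zijMat n r l i j (lastIdx n hn) (lastIdx n hn) ≠ 0 := by
  have hswap : Equiv.swap i j (lastIdx n hn) = lastIdx n hn :=
    Equiv.swap_apply_of_ne_of_ne (Ne.symm hi) (Ne.symm hj)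
  rw [zijMat, monoMat_last_entry hn _ _ hswap]
  exact zijWt_ne_zero r l i j _

/-- The element `ζ_i^l ζ_j^{-l} s_{ij}` of `L(r,p,n)`, for `i, j ≤ n-1`. -/
def zijL (r p n l : ℕ) (hr : 0 < r) (hn : 0 < n) (i j : Fin n) (hij : i ≠ j)
    (hi : i ≠ lastIdx n hn) (hj : j ≠ lastIdx n hn) : ↥(LGroup r p n hr hn) :=
  ⟨monoUnit n (Equiv.swap i j) (zijWt r l i j) (zijWt_ne_zero r l i j),
   ⟨zij_mem_GSet r p n l hr i j hij, zijL_last r l hn i j hi hj⟩⟩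

/-- The element `κ_{r,n-1} = (1/r)·Σ_{l<r} Σ_{1≤i<j≤n-1} ζ_i^l ζ_j^{-l} s_{ij}` of the
group algebra `ℂ[L(r,p,n)]`. -/
def kappaLA (r p n : ℕ) (hr : 0 < r) (hn : 0 < n) :
    MonoidAlgebra ℂ ↥(LGroup r p n hr hn) :=
  (1 / (r : ℂ)) • ∑ l ∈ Finset.range r, ∑ i : Fin n, ∑ j : Fin n,
    if h : i < j ∧ (j : ℕ) < n - 1 then
      MonoidAlgebra.single
        (zijL r p n l hr hn i j h.1.ne
          (by
            refine Fin.ne_of_val_ne ?_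
            have h1 : (i : ℕ) < (j : ℕ) := h.1
            have h2 : (j : ℕ) < n - 1 := h.2
            show (i : ℕ) ≠ n - 1
            omega)
          (by
            refine Fin.ne_of_val_ne ?_
            have h2 : (j : ℕ) < n - 1 := h.2
            show (j : ℕ) ≠ n - 1
            omega)) 1
    else 0

/-! ## The induced representation of statement on `Ind_L^G σ` -/

/-- The right regular representation of a group `G` on the space of functions
`G → ℂ`, given by `(x · f)(g) = f(g x)`. -/
def regRep (G : Type*) [Group G] : Representation ℂ G (G → ℂ) where
  toFun x :=
    { toFun := fun f => fun g => f (g * x)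
      map_add' := fun f g => rfl
      map_smul' := fun c f => rfl }
  map_one' := by
    refine LinearMap.ext fun f => ?_
    funext g
    simp
  map_mul' x y := by
    refine LinearMap.ext fun f => ?_
    funext g
    simp [Module.End.mul_apply, mul_assoc]

/-- The space of functions `f : G(r,p,n) → ℂ` with `f(hg) = σ(h)·f(g)` for all
`h ∈ L(r,p,n)`, where `σ(h)` is the `(n,n)` entry of `h`. -/
def IndSig (r p n : ℕ) (hr : 0 < r) (hn : 0 < n) :
    Submodule ℂ (↥(GGroup r p n hr) → ℂ) where
  carrier := {f | ∀ h g : ↥(GGroup r p n hr),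
    ((h : GLn n) : Matrix (Fin n) (Fin n) ℂ) ∈ LSet r p n hn →
    f (h * g) = ((h : GLn n) : Matrix (Fin n) (Fin n) ℂ) (lastIdx n hn) (lastIdx n hn) * f g}
  add_mem' := by
    intro a b ha hb h g hh
    simp [ha h g hh, hb h g hh, mul_add]
  zero_mem' := by intro h g hh; simp
  smul_mem' := by
    intro c a ha h g hh
    simp [ha h g hh]
    ring

lemma IndSig_invariant (r p n : ℕ) (hr : 0 < r) (hn : 0 < n) :
    RepInvariant (regRep ↥(GGroup r p n hr)) (IndSig r p n hr hn) := by
  intro x f hf h g hh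
  show f ((h * g) * x) = _ * f (g * x)
  rw [mul_assoc]
  exact hf h (g * x) hh

/-- The natural representation of `G(r,p,n)` on `ℂ^n` by matrix-vector
multiplication. -/
def natRep (r p n : ℕ) (hr : 0 < r) : Representation ℂ ↥(GGroup r p n hr) (Fin n → ℂ) where
  toFun g := Matrix.mulVecLin ((g : GLn n) : Matrix (Fin n) (Fin n) ℂ)
  map_one' := by
    simp only [OneMemClass.coe_one, Units.val_one, Matrix.mulVecLin_one]
    rfl
  map_mul' g h := by
    simp only [Subgroup.coe_mul, Units.val_mul, Matrix.mulVecLin_mul]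
    rw [Module.End.mul_eq_comp]

/-! ## The operators `Z_{t,r}` and `Z_{t+1/2,r}` -/

/-- `S ∪ S′` as a finite subset of `Fin t ⊕ Fin t`. -/
def SSfin {t : ℕ} (S : Finset (Fin t)) : Finset (Fin t ⊕ Fin t) :=
  Finset.univ.filter fun x => Sum.elim (· ∈ S) (· ∈ S) x

/-- The set partition `b_S` with blocks `S ∪ S′` and `{l,l′}` for `l ∉ S`. -/
def bS {t : ℕ} (S : Finset (Fin t)) : SP t :=
  Setoid.ker fun x : Fin t ⊕ Fin t =>
    if x ∈ SSfin S then (none : Option (Fin t ⊕ Fin t)) else some x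

/-- The set partition `d_I` with blocks `I`, `(S ∪ S′) \ I` and `{l,l′}` for `l ∉ S`. -/
def dI {t : ℕ} (S : Finset (Fin t)) (I : Finset (Fin t ⊕ Fin t)) : SP t :=
  Setoid.ker fun x : Fin t ⊕ Fin t =>
    if x ∈ I then (Sum.inl true : Bool ⊕ (Fin t ⊕ Fin t))
    else if x ∈ SSfin S then Sum.inl false else Sum.inr x

/-- `N(I)` : the number of top-row (unprimed) elements of `I`. -/
def NIc {t : ℕ} (I : Finset (Fin t ⊕ Fin t)) : ℕ :=
  (I.filter fun x => x.isLeft = true).card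

/-- `M(I)` : the number of bottom-row (primed) elements of `I`. -/
def MIc {t : ℕ} (I : Finset (Fin t ⊕ Fin t)) : ℕ :=
  (I.filter fun x => x.isRight = true).card

/-- The operator `Z_{t,r}` on `V^{⊗t}`.  The inner sum over unordered partitions
`{I, (S∪S′)∖I}` (each counted once) is written as `1/2` times the sum over ordered
proper nonempty subsets `I` of `S ∪ S′`; these agree since `d_I = d_{(S∪S′)∖I}` and
the signs coincide. -/
def Zop (r n t : ℕ) : TP n t →ₗ[ℂ] TP n t :=
  (n.choose 2 : ℂ) • LinearMap.id +
  ∑ S ∈ (Finset.univ : Finset (Fin t)).powerset.filter (fun S => S ≠ ∅),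
    ((-1 : ℂ) ^ S.card) •
      (((n : ℂ) - 1) • phiD n t (bS S) +
        (1 / 2 : ℂ) •
          ∑ I ∈ (SSfin S).powerset.filter (fun I =>
              I ≠ ∅ ∧ I ≠ SSfin S ∧ ((NIc I : ℤ) ≡ (MIc I : ℤ) [ZMOD (r : ℤ)])),
            ((-1 : ℂ) ^ ((NIc I : ℤ) - (MIc I : ℤ))) • (phiD n t (dI S I) - phiD n t (bS S)))

/-- The operator `Z_{k+1/2,r}` on `V^{⊗(k+1)}`; as in `Zop`, but for `S` containing
`k+1` the inner sum is restricted to partitions in which `k+1` and `(k+1)′` lie in the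
same part. -/
def ZopHalf (r n k : ℕ) : TP n (k + 1) →ₗ[ℂ] TP n (k + 1) :=
  (n.choose 2 : ℂ) • LinearMap.id +
  ∑ S ∈ (Finset.univ : Finset (Fin (k + 1))).powerset.filter (fun S => S ≠ ∅),
    ((-1 : ℂ) ^ S.card) •
      (((n : ℂ) - 1) • phiD n (k + 1) (bS S) +
        (1 / 2 : ℂ) •
          ∑ I ∈ (SSfin S).powerset.filter (fun I =>
              I ≠ ∅ ∧ I ≠ SSfin S ∧ ((NIc I : ℤ) ≡ (MIc I : ℤ) [ZMOD (r : ℤ)]) ∧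
              (Fin.last k ∈ S →
                ((Sum.inl (Fin.last k) : Fin (k+1) ⊕ Fin (k+1)) ∈ I ↔
                  (Sum.inr (Fin.last k) : Fin (k+1) ⊕ Fin (k+1)) ∈ I))),
            ((-1 : ℂ) ^ ((NIc I : ℤ) - (MIc I : ℤ))) •
              (phiD n (k + 1) (dI S I) - phiD n (k + 1) (bS S)))

/-- The diagonal action of `κ_{r,n}` on `V^{⊗k}`. -/
def kappaOpFull (r n k : ℕ) : TP n k →ₗ[ℂ] TP n k :=
  (1 / (r : ℂ)) • ∑ l ∈ Finset.range r, ∑ i : Fin n, ∑ j : Fin n,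
    if i < j then tensorPow n k (zijMat n r l i j) else 0

/-- The diagonal action of `κ_{r,n-1}` on `V^{⊗(k+1)}`. -/
def kappaOpL (r n k : ℕ) : TP n (k + 1) →ₗ[ℂ] TP n (k + 1) :=
  (1 / (r : ℂ)) • ∑ l ∈ Finset.range r, ∑ i : Fin n, ∑ j : Fin n,
    if i < j ∧ (j : ℕ) < n - 1 then tensorPow n (k + 1) (zijMat n r l i j) else 0

/-- `w ⊗ v_n ∈ V^{⊗(k+1)}` for `w ∈ V^{⊗k}`. -/
def extendLast (n k : ℕ) (hn : 0 < n) (w : TP n k) : TP n (k + 1) :=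
  fun j => if j (Fin.last k) = lastIdx n hn then w (fun t => j t.castSucc) else 0

/-- `A ⊗ Id_{V^{⊗(l-j)}}` : the extension of an operator on `V^{⊗j}` to `V^{⊗l}`,
acting on the first `j` tensor factors. -/
def extendOp (n j l : ℕ) (hjl : j ≤ l) (A : TP n j →ₗ[ℂ] TP n j) :
    TP n l →ₗ[ℂ] TP n l where
  toFun f := fun u =>
    A (fun x : Fin j → Fin n =>
        f (fun t : Fin l => if h : (t : ℕ) < j then x ⟨t, h⟩ else u t))
      (fun s : Fin j => u (Fin.castLE hjl s))
  map_add' f g := by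
    funext u
    show A (fun x : Fin j → Fin n =>
        (f + g) (fun t : Fin l => if h : (t : ℕ) < j then x ⟨t, h⟩ else u t))
      (fun s : Fin j => u (Fin.castLE hjl s)) =
      A (fun x : Fin j → Fin n =>
        f (fun t : Fin l => if h : (t : ℕ) < j then x ⟨t, h⟩ else u t))
      (fun s : Fin j => u (Fin.castLE hjl s)) +
      A (fun x : Fin j → Fin n =>
        g (fun t : Fin l => if h : (t : ℕ) < j then x ⟨t, h⟩ else u t))
      (fun s : Fin j => u (Fin.castLE hjl s))
    have h : (fun x : Fin j → Fin n =>
        (f + g) (fun t : Fin l => if h : (t : ℕ) < j then x ⟨t, h⟩ else u t)) =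
      (fun x : Fin j → Fin n =>
        f (fun t : Fin l => if h : (t : ℕ) < j then x ⟨t, h⟩ else u t)) +
      (fun x : Fin j → Fin n =>
        g (fun t : Fin l => if h : (t : ℕ) < j then x ⟨t, h⟩ else u t)) := rfl
    rw [h, map_add]
    rfl
  map_smul' c f := by
    funext u
    show A (fun x : Fin j → Fin n =>
        (c • f) (fun t : Fin l => if h : (t : ℕ) < j then x ⟨t, h⟩ else u t))
      (fun s : Fin j => u (Fin.castLE hjl s)) =
      c • (A (fun x : Fin j → Fin n =>
        f (fun t : Fin l => if h : (t : ℕ) < j then x ⟨t, h⟩ else u t))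
      (fun s : Fin j => u (Fin.castLE hjl s)))
    have h : (fun x : Fin j → Fin n =>
        (c • f) (fun t : Fin l => if h : (t : ℕ) < j then x ⟨t, h⟩ else u t)) =
      c • (fun x : Fin j → Fin n =>
        f (fun t : Fin l => if h : (t : ℕ) < j then x ⟨t, h⟩ else u t)) := rfl
    rw [h, _root_.map_smul]
    rfl

/-! ## Diagram multiplication (statement of the structure constants) -/

/-- The bottom row of `d₁` matches the top row of `d₂`. -/
def rowMatch (k : ℕ) (d1 d2 : SP k) : Prop :=
  ∀ i j : Fin k, d1.r (Sum.inr i) (Sum.inr j) ↔ d2.r (Sum.inl i) (Sum.inl j)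

/-- Extend a setoid on `α` along an injection `e : α → β` by singleton classes on
the complement of the range. -/
def extendSetoid {α β : Type*} (e : α → β) (he : Function.Injective e)
    (d : Setoid α) : Setoid β where
  r x y := x = y ∨ ∃ a b, d.r a b ∧ x = e a ∧ y = e b
  iseqv := by
    constructor
    · intro x; exact Or.inl rfl
    · rintro x y (rfl | ⟨a, b, hab, rfl, rfl⟩)
      · exact Or.inl rfl
      · exact Or.inr ⟨b, a, d.iseqv.symm hab, rfl, rfl⟩
    · rintro x y z (rfl | ⟨a, b, hab, rfl, rfl⟩) h2
      · exact h2
      · rcases h2 with rfl | ⟨a', b', hab', hy, rfl⟩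
        · exact Or.inr ⟨a, b, hab, rfl, rfl⟩
        · have hba : b = a' := he hy
          exact Or.inr ⟨a, b', d.iseqv.trans hab (hba ▸ hab'), rfl, rfl⟩

/-- The three-row vertex set: top row, middle row, bottom row. -/
abbrev T3 (k : ℕ) : Type := Fin k ⊕ (Fin k ⊕ Fin k)

/-- `d₁` placed on the top and middle rows. -/
def embT (k : ℕ) : Fin k ⊕ Fin k → T3 k := Sum.map id Sum.inl

/-- `d₂` placed on the middle and bottom rows. -/
def embB (k : ℕ) : Fin k ⊕ Fin k → T3 k := Sum.inr

/-- The outer (top and bottom) rows. -/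
def embO (k : ℕ) : Fin k ⊕ Fin k → T3 k := Sum.map id Sum.inr

lemma embT_inj (k : ℕ) : Function.Injective (embT k) :=
  Function.Injective.sumMap Function.injective_id Sum.inl_injective

/-- The stacked three-row diagram : the join of `d₁` (on top∪middle) and `d₂`
(on middle∪bottom); its classes are the connected components. -/
def stacked (k : ℕ) (d1 d2 : SP k) : Setoid (T3 k) :=
  extendSetoid (embT k) (embT_inj k) d1 ⊔ extendSetoid (embB k) Sum.inr_injective d2

/-- The concatenation `d₁ ∘ d₂`, i.e. the restriction of the stacked diagram to the
outer rows. -/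
def compSetoid (k : ℕ) (d1 d2 : SP k) : SP k :=
  Setoid.comap (embO k) (stacked k d1 d2)

/-- `[d₁ ∘ d₂]` : the number of connected components of the stacked diagram contained
entirely in the middle row. -/
def midCount (k : ℕ) (d1 d2 : SP k) : ℕ :=
  Nat.card {q : Quotient (stacked k d1 d2) //
    ∀ x : T3 k, Quotient.mk (stacked k d1 d2) x = q → ∃ i : Fin k, x = Sum.inr (Sum.inl i)}

/-- A block entirely contained in the top row. -/
def topOnly {k : ℕ} (d : SP k) (q : Quotient d) : Prop :=
  ∀ x, Quotient.mk d x = q → ∃ i : Fin k, x = Sum.inl i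

/-- A block entirely contained in the bottom row. -/
def botOnly {k : ℕ} (d : SP k) (q : Quotient d) : Prop :=
  ∀ x, Quotient.mk d x = q → ∃ i : Fin k, x = Sum.inr i

/-- `x` lies in the block merged from the pair `pr = (q₁, q₂)`. -/
def memPair {k : ℕ} (d1 d2 : SP k) : Fin k ⊕ Fin k → Quotient d1 × Quotient d2 → Prop
  | Sum.inl i, pr => Quotient.mk d1 (Sum.inl i) = pr.1
  | Sum.inr i, pr => Quotient.mk d2 (Sum.inr i) = pr.2

/-- `d` is obtained from `d₁ ∘ d₂` by choosing an injective partial matching between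
the top-only blocks of `d₁` and the bottom-only blocks of `d₂` and merging each
matched pair into a single block. -/
def IsCoarsening (k : ℕ) (d1 d2 d : SP k) : Prop :=
  ∃ P : Finset (Quotient d1 × Quotient d2),
    (∀ pr ∈ P, topOnly d1 pr.1 ∧ botOnly d2 pr.2) ∧
    (∀ pr ∈ P, ∀ pr' ∈ P, pr.1 = pr'.1 → pr = pr') ∧
    (∀ pr ∈ P, ∀ pr' ∈ P, pr.2 = pr'.2 → pr = pr') ∧
    (∀ x y : Fin k ⊕ Fin k, d.r x y ↔
      ((compSetoid k d1 d2).r x y ∨ ∃ pr ∈ P, memPair d1 d2 x pr ∧ memPair d1 d2 y pr))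

/-- The (integer) falling factorial `(a)_b = a(a-1)⋯(a-b+1)`. -/
def fallingC (a : ℤ) (b : ℕ) : ℤ := ∏ i ∈ Finset.range b, (a - i)

/-! ## The elements `c₁, c₂` of `G(2,2,2k)` and the operator `M_{k,2,2}` -/

/-- The underlying function of the permutation `(1 2)(3 4)⋯(2k-1 2k)` of `Fin (2k)`:
it swaps `2t` and `2t+1` (0-indexed) for each `t < k`. -/
def pairFn (k : ℕ) : Fin (2 * k) → Fin (2 * k) := fun x =>
  if _ : (x : ℕ) % 2 = 0 then ⟨(x : ℕ) + 1, by have := x.2; omega⟩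
  else ⟨(x : ℕ) - 1, by have := x.2; omega⟩

lemma pairFn_invol (k : ℕ) : Function.Involutive (pairFn k) := by
  intro x
  unfold pairFn
  split_ifs with h1 h2 h3
  · refine Fin.ext ?_; simp only [Fin.val_mk] at h2 ⊢; omega
  · refine Fin.ext ?_; simp only [Fin.val_mk] at h2 ⊢; omega
  · refine Fin.ext ?_; simp only [Fin.val_mk] at h3 ⊢; omega
  · refine Fin.ext ?_; simp only [Fin.val_mk] at h3 ⊢; omega

/-- The permutation `(1 2)(3 4)⋯(2k-1 2k)` of `Fin (2k)`. -/
def pairPerm (k : ℕ) : Equiv.Perm (Fin (2 * k)) :=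
  Function.Involutive.toPerm (pairFn k) (pairFn_invol k)

/-- `c₂` : the permutation matrix of `(1 2)(3 4)⋯(2k-1 2k)`. -/
def c2Mat (k : ℕ) : Matrix (Fin (2 * k)) (Fin (2 * k)) ℂ :=
  monoMat (2 * k) (pairPerm k) (fun _ => 1)

/-- The diagonal matrix `diag(-1,-1,1,…,1)`. -/
def dMat (k : ℕ) : Matrix (Fin (2 * k)) (Fin (2 * k)) ℂ :=
  Matrix.diagonal fun t => if (t : ℕ) < 2 then (-1 : ℂ) else 1

/-- `c₁ = D · c₂`. -/
def c1Mat (k : ℕ) : Matrix (Fin (2 * k)) (Fin (2 * k)) ℂ := dMat k * c2Mat k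

/-- Two matrices are conjugate by an element of `G(r,p,n)`. -/
def conjIn (r p n : ℕ) (c x : Matrix (Fin n) (Fin n) ℂ) : Prop :=
  ∃ g ∈ GSet r p n, g * c = x * g

/-- The conjugacy class of `c` in `G(r,p,n)`. -/
def conjClass (r p n : ℕ) (c : Matrix (Fin n) (Fin n) ℂ) :
    Set (Matrix (Fin n) (Fin n) ℂ) :=
  {h | h ∈ GSet r p n ∧ conjIn r p n c h}

/-- The set partition of `{1,…,k,1′,…,k′}` all of whose blocks are singletons. -/
def singletonSP (k : ℕ) : SP k := ⟨Eq, eq_equivalence⟩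

/-- The operator `M_{k,2,2} = φ_k(x_{d₀})` on `(ℂ^{2k})^{⊗k}`, where `d₀` is the set
partition with all blocks singletons. -/
def Mop (k : ℕ) : TP (2 * k) k →ₗ[ℂ] TP (2 * k) k :=
  phiX (2 * k) k (singletonSP k)


/-! An endomorphism of `V^{⊗k}` is a matrix `K o i` indexed by pairs of index tuples, and
`φ_k(x_d)` is the indicator of the pairs whose equality pattern `ker (i, o)` is `d`. Two pairs
have the same pattern iff a permutation of `{1,…,n}` carries one to the other, so the span of the
`φ_k(x_d)`, `d ∈ A_k(r,p,n)`, consists of the `S_n`-invariant matrices that vanish at every pair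
with pattern outside `A_k(r,p,n)`.

A block of `ker (i, o)` is the fibre of a value `v`, with `N - M = #i⁻¹(v) - #o⁻¹(v)`, the
defect of `v`. Patterns have at most `n` blocks, so `Θ` never occurs, and a pattern lies in
`Π ∪ Λ` iff all defects are congruent mod `r` to one multiple `c` of `m`: a value missed by
`(i, o)` has defect `0`, forcing `c ≡ 0` unless all `n` values occur. Defects add along
`i → j → o`, so this condition, and with it the whole description, survives matrix
multiplication; the identity matrix is supported on patterns `ker (o, o)`, of defect `0`. -/

instance (k : ℕ) : Fintype (SP k) :=
  Fintype.ofInjective (fun d : SP k => d.r) fun _ _ h =>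
    Setoid.ext fun x y => iff_of_eq (congrFun (congrFun h x) y)

lemma coeX_eq (n t : ℕ) (d : SP t) (c : Fin t ⊕ Fin t → Fin n) :
    coeX n t d c = if d = Setoid.ker c then 1 else 0 := by
  simp only [coeX, Setoid.ext_iff, Setoid.ker_def]

abbrev TensorKernel (n k : ℕ) : Type := (Fin k → Fin n) → (Fin k → Fin n) → ℂ

section KernelMap

variable {n k : ℕ}

@[simp] lemma kernelMap_apply (K : TensorKernel n k) (f : TP n k) (o : Fin k → Fin n) :
    kernelMap n k K f o = ∑ i, K o i * f i := rfl

lemma kernelMap_zero : kernelMap n k 0 = 0 := by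
  ext f o; simp

lemma kernelMap_add (K K' : TensorKernel n k) :
    kernelMap n k (K + K') = kernelMap n k K + kernelMap n k K' := by
  ext f o; simp [add_mul, Finset.sum_add_distrib]

lemma kernelMap_smul (c : ℂ) (K : TensorKernel n k) :
    kernelMap n k (c • K) = c • kernelMap n k K := by
  ext f o; simp [Finset.mul_sum, mul_assoc]

lemma kernelMap_sum_smul {ι : Type*} (s : Finset ι) (c : ι → ℂ) (K : ι → TensorKernel n k) :
    ∑ d ∈ s, c d • kernelMap n k (K d) = kernelMap n k fun o i => ∑ d ∈ s, c d * K d o i := by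
  refine LinearMap.ext fun f => funext fun o => ?_
  rw [LinearMap.sum_apply, Finset.sum_apply]
  simp only [LinearMap.smul_apply, Pi.smul_apply, kernelMap_apply, smul_eq_mul, Finset.mul_sum,
    Finset.sum_mul, mul_assoc]
  exact Finset.sum_comm

lemma kernelMap_comp (K K' : TensorKernel n k) :
    kernelMap n k K ∘ₗ kernelMap n k K' = kernelMap n k fun o i => ∑ j, K o j * K' j i := by
  ext f o
  simp only [LinearMap.comp_apply, kernelMap_apply, Finset.mul_sum, Finset.sum_mul, mul_assoc]
  exact Finset.sum_comm

lemma kernelMap_ite_eq : kernelMap n k (fun o i => if i = o then 1 else 0) = LinearMap.id := by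
  ext f o; simp

end KernelMap

lemma exists_perm_comp_eq_of_ker_eq {α β : Type*} [Finite β] {f f' : α → β}
    (h : Setoid.ker f = Setoid.ker f') : ∃ τ : Equiv.Perm β, τ ∘ f = f' := by
  let e : Set.range f ≃ Set.range f' :=
    (Setoid.quotientKerEquivRange f).symm.trans
      ((Quotient.congrRight fun _ _ => by rw [h]).trans (Setoid.quotientKerEquivRange f'))
  refine ⟨e.extendSubtype, funext fun x => ?_⟩
  have hx : (Setoid.quotientKerEquivRange f).symm ⟨f x, x, rfl⟩ = ⟦x⟧ :=
    (Equiv.symm_apply_eq _).2 rfl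
  rw [Function.comp_apply, e.extendSubtype_apply_of_mem _ ⟨x, rfl⟩]
  simp only [e, Equiv.trans_apply, hx]
  rfl

lemma ker_sum_elim_perm_comp {n k : ℕ} (τ : Equiv.Perm (Fin n)) (i o : Fin k → Fin n) :
    Setoid.ker (Sum.elim (τ ∘ i) (τ ∘ o)) = Setoid.ker (Sum.elim i o) := by
  ext x y
  cases x <;> cases y <;> simp [Setoid.ker_def]

section Defect

variable {n k : ℕ}

def fiberCard (u : Fin k → Fin n) (v : Fin n) : ℕ := Nat.card {a // u a = v}

def defect (i o : Fin k → Fin n) (v : Fin n) : ℤ := fiberCard i v - fiberCard o v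

lemma defect_add (i j o : Fin k → Fin n) (v : Fin n) :
    defect i j v + defect j o v = defect i o v := by
  simp only [defect]; ring

lemma defect_eq_zero_of_notMem_range {i o : Fin k → Fin n} {v : Fin n}
    (hv : v ∉ Set.range (Sum.elim i o)) : defect i o v = 0 := by
  have hi : fiberCard i v = 0 := Nat.card_eq_zero.2 <| .inl ⟨fun a => hv ⟨.inl a, a.2⟩⟩
  have ho : fiberCard o v = 0 := Nat.card_eq_zero.2 <| .inl ⟨fun a => hv ⟨.inr a, a.2⟩⟩
  rw [defect, hi, ho, sub_self]

lemma topCt_ker (i o : Fin k → Fin n) (x : Fin k ⊕ Fin k) :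
    topCt (Setoid.ker (Sum.elim i o)) ⟦x⟧ = fiberCard i (Sum.elim i o x) :=
  Nat.card_congr <| Equiv.subtypeEquivRight fun _ => Quotient.eq.trans Setoid.ker_def

lemma botCt_ker (i o : Fin k → Fin n) (x : Fin k ⊕ Fin k) :
    botCt (Setoid.ker (Sum.elim i o)) ⟦x⟧ = fiberCard o (Sum.elim i o x) :=
  Nat.card_congr <| Equiv.subtypeEquivRight fun _ => Quotient.eq.trans Setoid.ker_def

lemma topCt_sub_botCt_ker (i o : Fin k → Fin n) (x : Fin k ⊕ Fin k) :
    (topCt (Setoid.ker (Sum.elim i o)) ⟦x⟧ : ℤ) - botCt (Setoid.ker (Sum.elim i o)) ⟦x⟧ =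
      defect i o (Sum.elim i o x) := by
  rw [topCt_ker, botCt_ker, defect]

lemma nBlocks_ker_le (f : Fin k ⊕ Fin k → Fin n) : nBlocks (Setoid.ker f) ≤ n :=
  (Nat.card_le_card_of_injective _ (Setoid.kerLift_injective f)).trans_eq (Nat.card_fin n)

lemma nBlocks_ker_eq_iff (f : Fin k ⊕ Fin k → Fin n) :
    nBlocks (Setoid.ker f) = n ↔ Function.Surjective f := by
  have hlift : Function.Surjective (Setoid.kerLift f) ↔ Function.Surjective f := by
    rw [← Set.range_eq_univ, ← Set.range_eq_univ, Setoid.range_kerLift_eq_range]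
  rw [← hlift]
  constructor
  · intro h
    exact ((Setoid.kerLift_injective f).bijective_of_nat_card_le
      ((Nat.card_fin n).trans h.symm).le).2
  · intro h
    exact (Nat.card_congr (Equiv.ofBijective _ ⟨Setoid.kerLift_injective f, h⟩)).trans
      (Nat.card_fin n)

end Defect

lemma sub_modEq_zero_iff {N a b : ℤ} : a - b ≡ 0 [ZMOD N] ↔ a ≡ b [ZMOD N] := by
  rw [Int.modEq_zero_iff_dvd, Int.modEq_iff_dvd, dvd_sub_comm]

section Characterization

variable {r p n k : ℕ}

lemma exists_defect_modEq_of_inA {i o : Fin k → Fin n}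
    (h : inA r p n (Setoid.ker (Sum.elim i o))) :
    ∃ c : ℤ, ((r / p : ℕ) : ℤ) ∣ c ∧ ∀ v, defect i o v ≡ c [ZMOD r] := by
  rcases h with hPi | ⟨hcard, hblock, hconst⟩ | ⟨hlt, -⟩
  · refine ⟨0, dvd_zero _, fun v => ?_⟩
    by_cases hv : v ∈ Set.range (Sum.elim i o)
    · obtain ⟨x, rfl⟩ := hv
      rw [← topCt_sub_botCt_ker]
      exact sub_modEq_zero_iff.2 (hPi ⟦x⟧)
    · rw [defect_eq_zero_of_notMem_range hv]
  · have hsurj := (nBlocks_ker_eq_iff _).1 hcard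
    rcases isEmpty_or_nonempty (Fin n) with _ | ⟨⟨v₀⟩⟩
    · exact ⟨0, dvd_zero _, isEmptyElim⟩
    obtain ⟨x₀, rfl⟩ := hsurj v₀
    refine ⟨defect i o (Sum.elim i o x₀), ?_, fun v => ?_⟩
    · rw [← topCt_sub_botCt_ker, ← Int.modEq_zero_iff_dvd, sub_modEq_zero_iff]
      exact (hblock ⟦x₀⟧).1
    · obtain ⟨x, rfl⟩ := hsurj v
      rw [← topCt_sub_botCt_ker, ← topCt_sub_botCt_ker]
      exact hconst ⟦x⟧ ⟦x₀⟧
  · exact absurd (nBlocks_ker_le _) hlt.not_ge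

lemma inA_of_defect_modEq (hpr : p ∣ r) {i o : Fin k → Fin n} {c : ℤ}
    (hc : ((r / p : ℕ) : ℤ) ∣ c) (h : ∀ v, defect i o v ≡ c [ZMOD r]) :
    inA r p n (Setoid.ker (Sum.elim i o)) := by
  have hblock (x : Fin k ⊕ Fin k) : (topCt (Setoid.ker (Sum.elim i o)) ⟦x⟧ : ℤ) -
      botCt (Setoid.ker (Sum.elim i o)) ⟦x⟧ ≡ c [ZMOD r] := by
    rw [topCt_sub_botCt_ker]; exact h _
  by_cases hc0 : c ≡ 0 [ZMOD r]
  · exact Or.inl fun q => q.inductionOn fun x => sub_modEq_zero_iff.1 ((hblock x).trans hc0)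
  have hsurj : Function.Surjective (Sum.elim i o) := fun v => by
    by_contra hv
    exact hc0 ((h v).symm.trans (by rw [defect_eq_zero_of_notMem_range hv]))
  have hm : ((r / p : ℕ) : ℤ) ∣ r := Int.natCast_dvd_natCast.2 (Nat.div_dvd_of_dvd hpr)
  refine Or.inr (Or.inl ⟨(nBlocks_ker_eq_iff _).2 hsurj, fun q => q.inductionOn fun x => ⟨?_, ?_⟩,
    fun q q' => q.inductionOn₂ q' fun x y => (hblock x).trans (hblock y).symm⟩)
  · exact sub_modEq_zero_iff.1 (((hblock x).of_dvd hm).trans (Int.modEq_zero_iff_dvd.2 hc))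
  · exact fun hxy => hc0 ((hblock x).symm.trans (sub_modEq_zero_iff.2 hxy))

lemma inA_ker_sum_elim_trans (hpr : p ∣ r) {i j o : Fin k → Fin n}
    (hij : inA r p n (Setoid.ker (Sum.elim i j))) (hjo : inA r p n (Setoid.ker (Sum.elim j o))) :
    inA r p n (Setoid.ker (Sum.elim i o)) := by
  obtain ⟨c, hc, h⟩ := exists_defect_modEq_of_inA hij
  obtain ⟨c', hc', h'⟩ := exists_defect_modEq_of_inA hjo
  exact inA_of_defect_modEq hpr (dvd_add hc hc') fun v => defect_add i j o v ▸ (h v).add (h' v)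

lemma inA_ker_sum_elim_self (hpr : p ∣ r) (o : Fin k → Fin n) :
    inA r p n (Setoid.ker (Sum.elim o o)) :=
  inA_of_defect_modEq hpr (dvd_zero _) fun v => by rw [defect, sub_self]

end Characterization

structure IsAdmissibleKernel (r p : ℕ) {n k : ℕ} (K : TensorKernel n k) : Prop where
  perm_invariant : ∀ (τ : Equiv.Perm (Fin n)) (o i : Fin k → Fin n), K (τ ∘ o) (τ ∘ i) = K o i
  eq_zero_of_not_inA : ∀ o i, ¬ inA r p n (Setoid.ker (Sum.elim i o)) → K o i = 0

/-- The value of `K` on the pairs of tuples with equality pattern `d` (well defined when `K` is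
admissible), or `0` when no pair has pattern `d`. -/
def kernelCoeff {n k : ℕ} (K : TensorKernel n k) (d : SP k) : ℂ :=
  if h : ∃ io : (Fin k → Fin n) × (Fin k → Fin n), Setoid.ker (Sum.elim io.1 io.2) = d then
    K h.choose.2 h.choose.1 else 0

namespace IsAdmissibleKernel

variable {r p n k : ℕ} {K K' : TensorKernel n k}

lemma zero : IsAdmissibleKernel r p (0 : TensorKernel n k) :=
  ⟨fun _ _ _ => rfl, fun _ _ _ => rfl⟩

lemma add (hK : IsAdmissibleKernel r p K) (hK' : IsAdmissibleKernel r p K') :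
    IsAdmissibleKernel r p (K + K') :=
  ⟨fun τ o i => by simp [hK.perm_invariant, hK'.perm_invariant],
   fun o i hA => by simp [hK.eq_zero_of_not_inA o i hA, hK'.eq_zero_of_not_inA o i hA]⟩

lemma smul (c : ℂ) (hK : IsAdmissibleKernel r p K) : IsAdmissibleKernel r p (c • K) :=
  ⟨fun τ o i => by simp [hK.perm_invariant], fun o i hA => by simp [hK.eq_zero_of_not_inA o i hA]⟩

lemma comp (hpr : p ∣ r) (hK : IsAdmissibleKernel r p K) (hK' : IsAdmissibleKernel r p K') :
    IsAdmissibleKernel r p fun o i => ∑ j, K o j * K' j i := by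
  refine ⟨fun τ o i => ?_, fun o i hA => Finset.sum_eq_zero fun j _ => ?_⟩
  · calc ∑ j, K (τ ∘ o) j * K' j (τ ∘ i)
        = ∑ j, K (τ ∘ o) (τ ∘ j) * K' (τ ∘ j) (τ ∘ i) :=
          (Fintype.sum_equiv ((Equiv.refl _).arrowCongr τ) _ _ fun _ => rfl).symm
      _ = ∑ j, K o j * K' j i := by simp only [hK.perm_invariant, hK'.perm_invariant]
  · by_cases hjo : inA r p n (Setoid.ker (Sum.elim j o))
    · rw [hK'.eq_zero_of_not_inA j i fun hij => hA (inA_ker_sum_elim_trans hpr hij hjo), mul_zero]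
    · rw [hK.eq_zero_of_not_inA o j hjo, zero_mul]

lemma ite_eq (hpr : p ∣ r) :
    IsAdmissibleKernel r p fun o i : Fin k → Fin n => if i = o then (1 : ℂ) else 0 :=
  ⟨fun τ o i => by simp only [τ.injective.comp_left.eq_iff],
   fun o i hA => if_neg fun (hio : i = o) => hA (hio ▸ inA_ker_sum_elim_self hpr o)⟩

lemma coeX {d : SP k} (hd : inA r p n d) :
    IsAdmissibleKernel r p fun o i => coeX n k d (Sum.elim i o) := by
  refine ⟨fun τ o i => by simp only [coeX_eq, ker_sum_elim_perm_comp], fun o i hA => ?_⟩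
  rw [coeX_eq, if_neg]
  rintro rfl
  exact hA hd

lemma apply_eq_of_ker_eq (hK : IsAdmissibleKernel r p K) {i o i' o' : Fin k → Fin n}
    (h : Setoid.ker (Sum.elim i o) = Setoid.ker (Sum.elim i' o')) : K o i = K o' i' := by
  obtain ⟨τ, hτ⟩ := exists_perm_comp_eq_of_ker_eq h
  rw [Sum.comp_elim, Sum.elim_eq_iff] at hτ
  rw [← hτ.1, ← hτ.2, hK.perm_invariant]

lemma kernelCoeff_ker (hK : IsAdmissibleKernel r p K) (i o : Fin k → Fin n) :
    kernelCoeff K (Setoid.ker (Sum.elim i o)) = K o i := by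
  have hex : ∃ io : (Fin k → Fin n) × (Fin k → Fin n),
      Setoid.ker (Sum.elim io.1 io.2) = Setoid.ker (Sum.elim i o) := ⟨(i, o), rfl⟩
  rw [kernelCoeff, dif_pos hex]
  exact hK.apply_eq_of_ker_eq hex.choose_spec

lemma kernelMap_eq_sum (hK : IsAdmissibleKernel r p K) :
    kernelMap n k K = ∑ d ∈ Finset.univ.filter (inA r p n), kernelCoeff K d • phiX n k d := by
  simp only [phiX]
  rw [kernelMap_sum_smul]
  congr 1
  funext o i
  simp only [coeX_eq, mul_ite, mul_one, mul_zero, Finset.sum_ite_eq', Finset.mem_filter,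
    Finset.mem_univ, true_and]
  split_ifs with hA
  · exact (hK.kernelCoeff_ker i o).symm
  · exact hK.eq_zero_of_not_inA o i hA

end IsAdmissibleKernel

def admissibleEnds (r p n k : ℕ) : Submodule ℂ (TP n k →ₗ[ℂ] TP n k) where
  carrier := {F | ∃ K : TensorKernel n k, IsAdmissibleKernel r p K ∧ kernelMap n k K = F}
  zero_mem' := ⟨0, .zero, kernelMap_zero⟩
  add_mem' := by
    rintro _ _ ⟨K, hK, rfl⟩ ⟨K', hK', rfl⟩
    exact ⟨K + K', hK.add hK', kernelMap_add K K'⟩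
  smul_mem' := by
    rintro c _ ⟨K, hK, rfl⟩
    exact ⟨c • K, hK.smul c, kernelMap_smul c K⟩

lemma span_tanSet_eq_admissibleEnds (r p n k : ℕ) :
    Submodule.span ℂ (TanSet r p n k) = admissibleEnds r p n k := by
  refine le_antisymm (Submodule.span_le.2 fun _ ⟨d, hd, hF⟩ =>
    ⟨_, IsAdmissibleKernel.coeX hd, hF.symm⟩) ?_
  rintro _ ⟨K, hK, rfl⟩
  rw [hK.kernelMap_eq_sum]
  exact Submodule.sum_mem _ fun d hd =>
    Submodule.smul_mem _ _ (Submodule.subset_span ⟨d, (Finset.mem_filter.1 hd).2, rfl⟩)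

theorem statement4_general (r p n k : ℕ) (hpr : p ∣ r) :
    (∀ F ∈ Submodule.span ℂ (TanSet r p n k),
      ∀ G ∈ Submodule.span ℂ (TanSet r p n k),
        F ∘ₗ G ∈ Submodule.span ℂ (TanSet r p n k)) ∧
    (LinearMap.id : TP n k →ₗ[ℂ] TP n k) ∈ Submodule.span ℂ (TanSet r p n k) := by
  rw [span_tanSet_eq_admissibleEnds]
  refine ⟨?_, ⟨_, .ite_eq hpr, kernelMap_ite_eq⟩⟩
  rintro _ ⟨K, hK, rfl⟩ _ ⟨K', hK', rfl⟩
  exact ⟨_, hK.comp hpr hK', (kernelMap_comp K K').symm⟩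

/-- The span of `{φ_k(x_d) : d ∈ A_k(r,p,n)}` is closed under
composition and contains the identity, hence is a unital subalgebra of
`End(V^{⊗k})`. -/
theorem statement4 (r p n k : ℕ) (hr : 0 < r) (hp : 0 < p) (hn : 0 < n) (hk : 0 < k)
    (hpr : p ∣ r) :
    (∀ F ∈ Submodule.span ℂ (TanSet r p n k),
      ∀ G ∈ Submodule.span ℂ (TanSet r p n k),
        F ∘ₗ G ∈ Submodule.span ℂ (TanSet r p n k)) ∧
    (LinearMap.id : TP n k →ₗ[ℂ] TP n k) ∈ Submodule.span ℂ (TanSet r p n k) :=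
  statement4_general r p n k hpr

end Tanabe
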